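/- Each necklace [α]-[x,y] forms a cyclic Gray code of length 2n-1 using only the push-to-the-top operation t_{2n-1}: applying t_{2n-1} exactly 2n-1 times to any permutation returns it to itself, and the intermediate permutations are exactly the 2n-1 distinct cyclic rotations of the length-(2n-1) prefix with the fixed suffix (x,y). Moreover, this cyclic sequence is a snake-in-the-box code under Kendall's τ-metric. -/

import Mathlib

def adjTranspositions (n : ℕ) : Set (Equiv.Perm (Fin n)) :=
  {s | ∃ i j : Fin n, (j : ℕ) = (i : ℕ) + 1 ∧ s = Equiv.swap i j}

/-- Kendall's τ-distance on `S_n`. -/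
noncomputable def kendall {n : ℕ} (σ π : Equiv.Perm (Fin n)) : ℕ :=
  sInf {k | ∃ l : List (Equiv.Perm (Fin n)), l.length = k ∧
    (∀ s ∈ l, s ∈ adjTranspositions n) ∧ σ * l.prod = π}

/-- Push-to-the-top operation `t_{i+1}` (1-indexed). -/
def pushToTop {n : ℕ} (i : Fin n) (π : Equiv.Perm (Fin n)) : Equiv.Perm (Fin n) :=
  π * (Fin.cycleRange i)⁻¹

/-- `t_{2n-1}` on `S_{2n+1}`. -/
def rotPrefix (n : ℕ) : Equiv.Perm (Fin (2 * n + 1)) → Equiv.Perm (Fin (2 * n + 1)) :=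
  pushToTop ⟨2 * n - 2, by omega⟩

/-!
Since `t_{2n-1} π = π c⁻¹` for the `(2n-1)`-cycle `c = (0 1 … 2n-2)`, the `k`-th iterate is
`π c⁻¹ᵏ`. Hence the orbit has period exactly `orderOf c = 2n-1` and never touches the last two
positions, which `c` fixes. Two distinct iterates differ by a nontrivial power of `c`; such a power
has the same support as `c`, of size `2n-1 ≠ 2`, so it is not a transposition and the Kendall
distance is at least `2`.
-/

open Equiv Equiv.Perm Finset

theorem Equiv.Perm.IsCycle.not_isSwap_of_mem_zpowers {α : Type*} [DecidableEq α] [Fintype α]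
    {c g : Perm α} (hc : c.IsCycle) (hcard : 2 < #c.support) (hg : g ∈ Subgroup.zpowers c)
    (hg1 : g ≠ 1) : ¬ g.IsSwap := by
  obtain ⟨j, rfl⟩ := mem_powers_iff_mem_zpowers.mpr hg
  have hsupp : (c ^ j).support = c.support :=
    hc.support_pow_eq_iff.mpr (mt orderOf_dvd_iff_pow_eq_one.mp hg1)
  rw [← card_support_eq_two, hsupp]
  omega

theorem Fin.orderOf_cycleRange {m : ℕ} (i : Fin m) : orderOf (Fin.cycleRange i) = i + 1 := by
  have : NeZero m := NeZero.of_pos i.pos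
  rcases eq_or_ne i 0 with rfl | hi
  · simp
  · rw [← lcm_cycleType, Fin.cycleType_cycleRange hi, Multiset.lcm_singleton, normalize_eq]

theorem Fin.not_isSwap_of_mem_zpowers_cycleRange {m : ℕ} {i : Fin m} (hi : (i : ℕ) ≠ 1)
    {g : Perm (Fin m)} (hg : g ∈ Subgroup.zpowers (Fin.cycleRange i)) (hg1 : g ≠ 1) :
    ¬ g.IsSwap := by
  have : NeZero m := NeZero.of_pos i.pos
  rcases eq_or_ne i 0 with rfl | hi0
  · rw [Fin.cycleRange_zero, Subgroup.zpowers_one_eq_bot, Subgroup.mem_bot] at hg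
    exact absurd hg hg1
  · have hc := Fin.isCycle_cycleRange hi0
    refine hc.not_isSwap_of_mem_zpowers ?_ hg hg1
    rw [← hc.orderOf, Fin.orderOf_cycleRange]
    have : (i : ℕ) ≠ 0 := Fin.val_ne_zero_iff.mpr hi0
    omega

theorem isSwap_of_mem_adjTranspositions {m : ℕ} {s : Perm (Fin m)}
    (hs : s ∈ adjTranspositions m) : s.IsSwap := by
  obtain ⟨i, j, hij, rfl⟩ := hs
  exact ⟨i, j, Fin.ne_of_val_ne (by omega), rfl⟩

theorem exists_list_adjTranspositions_prod_eq {m : ℕ} (g : Perm (Fin (m + 1))) :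
    ∃ l : List (Perm (Fin (m + 1))), (∀ s ∈ l, s ∈ adjTranspositions (m + 1)) ∧ l.prod = g := by
  have hg : g ∈ Submonoid.closure (Set.range fun i : Fin m ↦ swap i.castSucc i.succ) := by
    rw [mclosure_swap_castSucc_succ]
    trivial
  obtain ⟨l, hl, rfl⟩ := Submonoid.exists_list_of_mem_closure hg
  refine ⟨l, fun s hs ↦ ?_, rfl⟩
  obtain ⟨i, rfl⟩ := hl s hs
  exact ⟨i.castSucc, i.succ, by simp, rfl⟩

theorem two_le_kendall {m : ℕ} {σ τ : Perm (Fin (m + 1))} (hne : σ ≠ τ)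
    (hswap : ¬ (σ⁻¹ * τ).IsSwap) : 2 ≤ kendall σ τ := by
  obtain ⟨l₀, hl₀, hprod₀⟩ := exists_list_adjTranspositions_prod_eq (σ⁻¹ * τ)
  obtain ⟨l, hlen, hl, hprod⟩ := Nat.sInf_mem (s := {k | ∃ l : List (Perm (Fin (m + 1))),
      l.length = k ∧ (∀ s ∈ l, s ∈ adjTranspositions (m + 1)) ∧ σ * l.prod = τ})
    ⟨l₀.length, l₀, rfl, hl₀, by rw [hprod₀, mul_inv_cancel_left]⟩
  rw [kendall, ← hlen]
  match l, hl, hprod with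
  | [], _, hprod => exact absurd (by simpa using hprod) hne
  | [s], hl, hprod =>
    refine absurd ?_ hswap
    rw [← hprod, List.prod_singleton, inv_mul_cancel_left]
    exact isSwap_of_mem_adjTranspositions (hl s (List.mem_singleton_self s))
  | _ :: _ :: _, _, _ => simp

section PushToTop

variable {m : ℕ} (i : Fin m) (π : Perm (Fin m))

theorem pushToTop_iterate (k : ℕ) : (pushToTop i)^[k] π = π * (Fin.cycleRange i)⁻¹ ^ k := by
  induction k with
  | zero => simp
  | succ k ih => rw [Function.iterate_succ_apply', ih, pushToTop, pow_succ, mul_assoc]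

theorem pushToTop_iterate_eq_iff {k l : ℕ} :
    (pushToTop i)^[k] π = (pushToTop i)^[l] π ↔ k ≡ l [MOD i + 1] := by
  rw [pushToTop_iterate, pushToTop_iterate, mul_right_inj, pow_eq_pow_iff_modEq, orderOf_inv,
    Fin.orderOf_cycleRange]

theorem pushToTop_iterate_apply_of_lt {j : Fin m} (hij : i < j) (k : ℕ) :
    (pushToTop i)^[k] π j = π j := by
  rw [pushToTop_iterate, mul_apply,
    pow_apply_eq_self_of_apply_eq_self (by rw [inv_eq_iff_eq, Fin.cycleRange_of_gt hij])]

theorem two_le_kendall_pushToTop_iterate {i : Fin (m + 1)} (hi : (i : ℕ) ≠ 1)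
    (π : Perm (Fin (m + 1))) {k l : ℕ} (hne : (pushToTop i)^[k] π ≠ (pushToTop i)^[l] π) :
    2 ≤ kendall ((pushToTop i)^[k] π) ((pushToTop i)^[l] π) := by
  refine two_le_kendall hne (Fin.not_isSwap_of_mem_zpowers_cycleRange hi ?_ ?_)
  · rw [pushToTop_iterate, pushToTop_iterate, mul_inv_rev, mul_assoc, inv_mul_cancel_left,
      ← Subgroup.zpowers_inv]
    exact Subgroup.mul_mem _ (Subgroup.inv_mem _ (Subgroup.npow_mem_zpowers _ _))
      (Subgroup.npow_mem_zpowers _ _)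
  · exact fun h ↦ hne (inv_mul_eq_one.mp h)

end PushToTop

/-- A necklace is a cyclic Gray code of length `2n-1` under `t_{2n-1}`: applying `t_{2n-1}`
`2n-1` times returns to the start, the intermediate permutations are distinct, they all have
the same (fixed) last two entries, and the sequence is a snake-in-the-box code under
Kendall's τ-metric. -/
theorem stmt_9 (n : ℕ) (hn : 1 ≤ n) (π : Equiv.Perm (Fin (2 * n + 1))) :
    (rotPrefix n)^[2 * n - 1] π = π ∧
    (∀ k l : ℕ, k < 2 * n - 1 → l < 2 * n - 1 →
      (rotPrefix n)^[k] π = (rotPrefix n)^[l] π → k = l) ∧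
    (∀ k : ℕ, (rotPrefix n)^[k] π ⟨2 * n - 1, by omega⟩ = π ⟨2 * n - 1, by omega⟩ ∧
      (rotPrefix n)^[k] π ⟨2 * n, by omega⟩ = π ⟨2 * n, by omega⟩) ∧
    (∀ k l : ℕ, (rotPrefix n)^[k] π ≠ (rotPrefix n)^[l] π →
      2 ≤ kendall ((rotPrefix n)^[k] π) ((rotPrefix n)^[l] π)) := by
  have hperiod : (2 * n - 2 : ℕ) + 1 = 2 * n - 1 := by omega
  have heq_iff (k l : ℕ) :
      (rotPrefix n)^[k] π = (rotPrefix n)^[l] π ↔ k ≡ l [MOD 2 * n - 1] := by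
    rw [← hperiod]
    exact pushToTop_iterate_eq_iff _ π
  refine ⟨?_, ?_, fun k ↦ ⟨?_, ?_⟩, fun k l ↦ ?_⟩
  · exact (heq_iff _ 0).mpr (Nat.modEq_zero_iff_dvd.mpr dvd_rfl)
  · exact fun k l hk hl h ↦ ((heq_iff k l).mp h).eq_of_lt_of_lt hk hl
  · exact pushToTop_iterate_apply_of_lt _ π (Fin.mk_lt_mk.mpr (by omega)) k
  · exact pushToTop_iterate_apply_of_lt _ π (Fin.mk_lt_mk.mpr (by omega)) k
  · exact two_le_kendall_pushToTop_iterate (by dsimp only; omega) π
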